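/- arXiv:1101.3457 — 2 statements merged into one kernel-verified Lean document; each statement's English description precedes it below -/
import Mathlib

section
/- For every natural number m ≥ 1, the matrix Πᵐ (the m-th power of the Kimura matrix) has all diagonal entries equal to (1/4)(1 + 2μᵐ + λᵐ), all skew-diagonal entries equal to (1/4)(1 − 2μᵐ + λᵐ), and all remaining entries equal to (1/4)(1 − λᵐ), where λ = 1 − (4γ/3)q and μ = 1 − 2(1−γ/3)q. -/
set_option maxHeartbeats 1000000

open Matrix

noncomputable def kimura (q γ : ℝ) : Matrix (Fin 4) (Fin 4) ℝ :=
  fun i j => if i = j then 1 - q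
    else if (i : ℕ) + (j : ℕ) = 3 then (1 - 2 * γ / 3) * q
    else (γ / 3) * q

lemma fv0 : ((0 : Fin 4) : ℕ) = 0 := rfl
lemma fv1 : ((1 : Fin 4) : ℕ) = 1 := rfl
lemma fv2 : ((2 : Fin 4) : ℕ) = 2 := rfl
lemma fv3 : ((3 : Fin 4) : ℕ) = 3 := rfl

lemma kimura_aux (q γ : ℝ) (m : ℕ) (hm : 1 ≤ m) : ∀ i j : Fin 4,
    (kimura q γ ^ m) i j =
      if i = j then (1 + 2 * (1 - 2 * (1 - γ / 3) * q) ^ m + (1 - 4 * γ / 3 * q) ^ m) / 4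
      else if (i : ℕ) + (j : ℕ) = 3 then
        (1 - 2 * (1 - 2 * (1 - γ / 3) * q) ^ m + (1 - 4 * γ / 3 * q) ^ m) / 4
      else (1 - (1 - 4 * γ / 3 * q) ^ m) / 4 := by
  induction m with
  | zero => omega
  | succ n ih =>
    rcases Nat.eq_zero_or_pos n with h | h
    · subst h
      intro i j
      fin_cases i <;> fin_cases j <;> simp [kimura, Fin.ext_iff, fv0, fv1, fv2, fv3] <;> ring
    · intro i j
      rw [pow_succ, Matrix.mul_apply, Fin.sum_univ_four]
      have ih' := ih h
      fin_cases i <;> fin_cases j <;>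
        simp [ih', kimura, Fin.ext_iff, fv0, fv1, fv2, fv3] <;> ring

theorem kimura_pow_entries (q γ : ℝ) (m : ℕ) (hm : 1 ≤ m) (i j : Fin 4) :
    (kimura q γ ^ m) i j =
      if i = j then (1 + 2 * (1 - 2 * (1 - γ / 3) * q) ^ m + (1 - 4 * γ / 3 * q) ^ m) / 4
      else if (i : ℕ) + (j : ℕ) = 3 then
        (1 - 2 * (1 - 2 * (1 - γ / 3) * q) ^ m + (1 - 4 * γ / 3 * q) ^ m) / 4
      else (1 - (1 - 4 * γ / 3 * q) ^ m) / 4 := kimura_aux q γ m hm i j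
end

section
/- If |λ| < 1 and |μ| < 1, then Πᵐ converges entrywise to (1/4)·J as m → ∞, where J is the 4×4 all-ones matrix. -/
open Matrix Filter

/-- Hadamard-type matrix of eigenvectors of the Kimura matrix. -/
def Hd : Matrix (Fin 4) (Fin 4) ℝ :=
  fun i j => (-1:ℝ) ^ ((i.val / 2) * (j.val % 2) + (i.val % 2) * (j.val / 2))

/-- Eigenvalues of the Kimura matrix in the corresponding order. -/
noncomputable def dvec (q γ : ℝ) : Fin 4 → ℝ := fun k =>
  if k = 0 then 1 else if k = 3 then 1 - 4 * γ / 3 * q else 1 - 2 * (1 - γ / 3) * q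

lemma Hd_mul_Hd : Hd * Hd = (4:ℝ) • 1 := by
  ext i j
  fin_cases i <;> fin_cases j <;>
    norm_num [Hd, Matrix.mul_apply, Fin.sum_univ_four, Matrix.one_apply, Fin.ext_iff,
      (show ((2:Fin 4):ℕ) = 2 from rfl), (show ((3:Fin 4):ℕ) = 3 from rfl)]

lemma kimura_eq (q γ : ℝ) :
    kimura q γ = (1/4 : ℝ) • (Hd * Matrix.diagonal (dvec q γ) * Hd) := by
  ext i j
  fin_cases i <;> fin_cases j <;>
    · simp only [kimura, dvec, Hd, Matrix.smul_apply, Matrix.mul_apply,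
        Matrix.diagonal_apply, Fin.sum_univ_four]
      norm_num [Fin.ext_iff, (show ((2:Fin 4):ℕ) = 2 from rfl),
        (show ((3:Fin 4):ℕ) = 3 from rfl)]
      ring

lemma kimura_pow_eq (q γ : ℝ) (m : ℕ) :
    kimura q γ ^ m = (1/4 : ℝ) • (Hd * (Matrix.diagonal (dvec q γ))^m * Hd) := by
  induction m with
  | zero =>
      rw [pow_zero, pow_zero, Matrix.mul_one, Hd_mul_Hd, smul_smul]
      norm_num
  | succ n ih =>
      rw [pow_succ, ih, kimura_eq q γ, Matrix.smul_mul, Matrix.mul_smul, smul_smul]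
      have : Hd * Matrix.diagonal (dvec q γ) ^ n * Hd *
          (Hd * Matrix.diagonal (dvec q γ) * Hd) =
          Hd * Matrix.diagonal (dvec q γ) ^ n * (Hd * Hd) *
            (Matrix.diagonal (dvec q γ) * Hd) := by
        simp only [Matrix.mul_assoc]
      rw [this, Hd_mul_Hd, Matrix.mul_smul, Matrix.smul_mul, Matrix.mul_one, smul_smul]
      rw [pow_succ]
      norm_num [Matrix.mul_assoc]

theorem kimura_pow_tendsto_uniform (q γ : ℝ)
    (hlam : |1 - 4 * γ / 3 * q| < 1) (hmu : |1 - 2 * (1 - γ / 3) * q| < 1) :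
    ∀ i j : Fin 4,
      Tendsto (fun m : ℕ => (kimura q γ ^ m) i j) atTop (nhds (1 / 4)) := by
  have hl : Tendsto (fun m : ℕ => (1 - 4 * γ / 3 * q) ^ m) atTop (nhds 0) :=
    tendsto_pow_atTop_nhds_zero_of_abs_lt_one hlam
  have hm : Tendsto (fun m : ℕ => (1 - 2 * (1 - γ / 3) * q) ^ m) atTop (nhds 0) :=
    tendsto_pow_atTop_nhds_zero_of_abs_lt_one hmu
  intro i j
  have hform : ∀ m : ℕ, (kimura q γ ^ m) i j =
      (1 + Hd i 1 * Hd 1 j * (1 - 2*(1-γ/3)*q) ^ m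
         + Hd i 2 * Hd 2 j * (1 - 2*(1-γ/3)*q) ^ m
         + Hd i 3 * Hd 3 j * (1 - 4*γ/3*q) ^ m) / 4 := by
    intro m
    have h0 : Hd i 0 = 1 := by simp [Hd]
    have h0' : Hd 0 j = 1 := by simp [Hd]
    have hd0 : dvec q γ 0 = 1 := by simp [dvec]
    have hd1 : dvec q γ 1 = 1 - 2*(1-γ/3)*q := by
      simp [dvec, show (1:Fin 4) ≠ 0 from by decide, show (1:Fin 4) ≠ 3 from by decide]
    have hd2 : dvec q γ 2 = 1 - 2*(1-γ/3)*q := by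
      simp [dvec, show (2:Fin 4) ≠ 0 from by decide, show (2:Fin 4) ≠ 3 from by decide]
    have hd3 : dvec q γ 3 = 1 - 4*γ/3*q := by
      simp [dvec, show (3:Fin 4) ≠ 0 from by decide]
    rw [kimura_pow_eq, Matrix.diagonal_pow, Matrix.mul_assoc]
    simp only [Matrix.smul_apply, Matrix.mul_apply, Matrix.diagonal_apply,
      Fin.sum_univ_four, Pi.pow_apply, smul_eq_mul, h0, h0']
    norm_num [hd0, hd1, hd2, hd3,
      show (0:Fin 4) ≠ 2 from by decide, show (0:Fin 4) ≠ 3 from by decide,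
      show (1:Fin 4) ≠ 2 from by decide, show (1:Fin 4) ≠ 3 from by decide,
      show (2:Fin 4) ≠ 0 from by decide, show (2:Fin 4) ≠ 1 from by decide,
      show (2:Fin 4) ≠ 3 from by decide, show (3:Fin 4) ≠ 0 from by decide,
      show (3:Fin 4) ≠ 1 from by decide, show (3:Fin 4) ≠ 2 from by decide]
    ring
  rw [show (1:ℝ)/4 = (1 + Hd i 1 * Hd 1 j * 0 + Hd i 2 * Hd 2 j * 0 + Hd i 3 * Hd 3 j * 0) / 4
    by ring]
  simp only [hform]
  exact (((tendsto_const_nhds.add (hm.const_mul _)).add (hm.const_mul _)).add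
    (hl.const_mul _)).div_const 4
end
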